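/- arXiv:2111.09784 — 5 statements merged into one kernel-verified Lean document; each statement's English description precedes it below -/
import Mathlib

section
/- There are exactly 5 equivalence classes (under x ↦ x+t, t ∈ ℤ) of integer quadratics ax^2+bx+c with a(b^2-4ac) = 15, and exactly 4 of them satisfy b^2-4ac > 0. -/
/-- The superdiscriminant `I(f) = a*(b^2 - 4*a*c)` of the integer quadratic
polynomial `f(x) = a*x^2 + b*x + c`, encoded as the triple `(a, b, c)`. -/
def superdisc (p : ℤ × ℤ × ℤ) : ℤ := p.1 * (p.2.1 ^ 2 - 4 * p.1 * p.2.2)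

/-- Equivalence of integer quadratics under the substitution `x ↦ x + t`, `t ∈ ℤ`:
`a*(x+t)^2 + b*(x+t) + c = a*x^2 + (b + 2*a*t)*x + (a*t^2 + b*t + c)`. -/
def quadEquiv (p q : ℤ × ℤ × ℤ) : Prop :=
  ∃ t : ℤ, q = (p.1, p.2.1 + 2 * p.1 * t, p.1 * t ^ 2 + p.2.1 * t + p.2.2)

/-- The number of equivalence classes (under `x ↦ x + t`) of integer quadratics
with superdiscriminant `n` satisfying the extra condition `P`. -/
noncomputable def quadCount (n : ℤ) (P : ℤ × ℤ × ℤ → Prop) : ℕ :=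
  Nat.card (Quot (fun p q : {p : ℤ × ℤ × ℤ // superdisc p = n ∧ P p} =>
    quadEquiv p.1 q.1))

/-!
A shift `x ↦ x + t` fixes `a` and the discriminant and moves `b` through its residue class
mod `2a`; conversely, once `a ≠ 0` and the discriminant are fixed, `c` is determined by `b`.
So for `n ≠ 0` the classes of superdiscriminant `n` correspond to the pairs `(a, b mod 2a)` with
`a ∣ n` and `b² ≡ n / a (mod 4a)`, a finite set that can be listed. For `n = 15` only
`a = -1` (with `b` odd) and `a = 15` (with `b ≡ 1, 11, 19, 29 mod 30`) occur, and the
discriminant `15 / a` is positive exactly for `a = 15`.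
-/

def disc (p : ℤ × ℤ × ℤ) : ℤ := p.2.1 ^ 2 - 4 * p.1 * p.2.2

/-- A complete invariant of `quadEquiv` among quadratics of a fixed nonzero superdiscriminant. -/
def quadKey (p : ℤ × ℤ × ℤ) : ℤ × ℤ := (p.1, p.2.1 % (2 * p.1))

lemma quadKey_eq_of_quadEquiv {p q : ℤ × ℤ × ℤ} (h : quadEquiv p q) : quadKey p = quadKey q := by
  obtain ⟨t, rfl⟩ := h
  simp [quadKey, Int.add_mul_emod_self_left]

lemma quadEquiv_of_quadKey_eq {p q : ℤ × ℤ × ℤ} (ha : p.1 ≠ 0)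
    (hpq : superdisc p = superdisc q) (h : quadKey p = quadKey q) : quadEquiv p q := by
  obtain ⟨a, b, c⟩ := p
  obtain ⟨a', b', c'⟩ := q
  simp only [quadKey, Prod.mk.injEq] at h
  obtain ⟨rfl, hb⟩ := h
  obtain ⟨t, ht⟩ : 2 * a ∣ b' - b := Int.ModEq.dvd hb
  refine ⟨t, ?_⟩
  have hc : c' * (4 * a ^ 2) = (a * t ^ 2 + b * t + c) * (4 * a ^ 2) := by
    simp only [superdisc] at hpq
    linear_combination hpq + (a * (b' + b) + 2 * a ^ 2 * t) * ht
  rw [mul_right_cancel₀ (by positivity) hc, show b' = b + 2 * a * t by linarith]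

theorem Nat.card_quot_eq_card_range {α β : Type*} {r : α → α → Prop} (f : α → β)
    (hf : ∀ x y, r x y ↔ f x = f y) : Nat.card (Quot r) = Nat.card (Set.range f) := by
  obtain rfl : r = (Setoid.ker f).r := by ext x y; exact hf x y
  exact Nat.card_congr (Setoid.quotientKerEquivRange f)

noncomputable def superdiscKeys (n : ℤ) (Q : ℤ → Prop) [DecidablePred Q] : Finset (ℤ × ℤ) :=
  (n.divisors ×ˢ Finset.Ico 0 (2 * |n|)).filter fun k =>
    Q (n / k.1) ∧ k.2 < 2 * |k.1| ∧ 4 * k.1 ∣ k.2 ^ 2 - n / k.1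

lemma range_quadKey {n : ℤ} (hn : n ≠ 0) (Q : ℤ → Prop) [DecidablePred Q] :
    Set.range (fun p : {p // superdisc p = n ∧ Q (disc p)} => quadKey p.1) =
      superdiscKeys n Q := by
  ext ⟨a, r⟩
  simp only [Set.mem_range, Subtype.exists, superdiscKeys, Finset.coe_filter,
    Finset.mem_product, Int.mem_divisors, Finset.mem_Ico]
  constructor
  · rintro ⟨⟨a, b, c⟩, ⟨hsd, hQ⟩, hk⟩
    simp only [quadKey, Prod.mk.injEq] at hk
    obtain ⟨rfl, rfl⟩ := hk
    have ha : a ≠ 0 := by rintro rfl; exact hn (by simpa [superdisc] using hsd.symm)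
    have hdvd : a ∣ n := ⟨_, hsd.symm⟩
    have hdisc : n / a = disc (a, b, c) := by
      rw [← hsd, superdisc, Int.mul_ediv_cancel_left _ ha]; rfl
    have hlt : b % (2 * a) < 2 * |a| := by
      simpa [abs_mul] using Int.emod_lt b (mul_ne_zero two_ne_zero ha)
    have hle : |a| ≤ |n| := Int.le_of_dvd (abs_pos.mpr hn) ((abs_dvd_abs a n).mpr hdvd)
    refine ⟨⟨⟨hdvd, hn⟩, Int.emod_nonneg b (mul_ne_zero two_ne_zero ha), by linarith⟩,
      hdisc ▸ hQ, hlt, ?_⟩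
    rw [hdisc, Int.emod_def]
    exact ⟨c - b * (b / (2 * a)) + a * (b / (2 * a)) ^ 2, by simp only [disc]; ring⟩
  · rintro ⟨⟨⟨hdvd, -⟩, hr0, -⟩, hQ, hlt, c, hc⟩
    have ha : a ≠ 0 := by rintro rfl; exact hn (zero_dvd_iff.mp hdvd)
    have hdisc : disc (a, r, c) = n / a := by simp only [disc]; linarith
    refine ⟨(a, r, c), ⟨?_, hdisc ▸ hQ⟩, ?_⟩
    · rw [superdisc, ← disc, hdisc, Int.mul_ediv_cancel' hdvd]
    · simp only [quadKey, ← Int.emod_abs (b := 2 * a), abs_mul, abs_two]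
      rw [Int.emod_eq_of_lt hr0 hlt]

lemma quadCount_eq_card_superdiscKeys {n : ℤ} (hn : n ≠ 0) (Q : ℤ → Prop) [DecidablePred Q] :
    quadCount n (fun p => Q (disc p)) = (superdiscKeys n Q).card := by
  rw [quadCount, Nat.card_quot_eq_card_range (fun p => quadKey p.1), range_quadKey hn,
    Nat.card_coe_set_eq, Set.ncard_coe_finset]
  intro p q
  exact ⟨quadKey_eq_of_quadEquiv,
    quadEquiv_of_quadKey_eq (fun ha => hn (by simpa [superdisc, ha] using p.2.1.symm))
      (p.2.1.trans q.2.1.symm)⟩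

/-- There are exactly 5 classes of integer quadratics of superdiscriminant 15,
of which exactly 4 have positive discriminant. -/
theorem quad_count_fifteen :
    quadCount 15 (fun _ => True) = 5 ∧
    quadCount 15 (fun p => 0 < p.2.1 ^ 2 - 4 * p.1 * p.2.2) = 4 :=
  ⟨(quadCount_eq_card_superdiscKeys (by norm_num) fun _ => True).trans (by decide),
    (quadCount_eq_card_superdiscKeys (by norm_num) (0 < ·)).trans (by decide)⟩
end

section
/- Let p_1 and p_3 be odd primes with p_1 ≡ 1 (mod 4) and p_3 ≡ 3 (mod 4). Then the number of equivalence classes (under x ↦ x+t) of integer quadratics f = ax^2+bx+c with b even and a(b^2-4ac) = 4·p_1·p_3 equals 10 + 2·(p_3/p_1), where (p_3/p_1) is the Legendre symbol. -/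
/-!
A class of quadratics `a x² + 2B x + c` under `x ↦ x + t` is determined by `a` and by
`B mod |a|`: the shift moves `B` by `a t`, and `c` is then pinned down by the superdiscriminant.
The condition `a (4B² - 4ac) = 4N` says exactly that `a ∣ N` and `B² ≡ N / a (mod |a|)`.
So the number of classes is `∑_{a ∣ N} #{x ∈ ℤ/|a| : x² = N/a}`, the sum running over
positive and negative divisors. For `N = p₁ p₃` the root counts are `1 + (·/p)`, multiplied
across `p₁` and `p₃` by the Chinese remainder theorem. Since `(-1/p₁) = 1` and
`(-1/p₃) = -1`, the divisors `±p₃` together contribute `2`, `±p₁` contribute `2 + 2 (p₃/p₁)`,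
`±1` contribute `2` and `±p₁p₃` contribute `4 + 0`.
-/

noncomputable def numSqrts (n : ℕ) (c : ℤ) : ℕ := Nat.card {x : ZMod n // x ^ 2 = c}

lemma numSqrts_one (c : ℤ) : numSqrts 1 c = 1 :=
  have : Unique {x : ZMod 1 // x ^ 2 = c} :=
    ⟨⟨⟨0, Subsingleton.elim _ _⟩⟩, fun _ => Subtype.ext (Subsingleton.elim _ _)⟩
  Nat.card_unique

lemma numSqrts_prime {p : ℕ} [Fact p.Prime] (hp : p ≠ 2) (c : ℤ) :
    (numSqrts p c : ℤ) = legendreSym p c + 1 := by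
  rw [← legendreSym.card_sqrts p hp, numSqrts, ← Nat.card_eq_card_toFinset]
  rfl

lemma numSqrts_mul {m n : ℕ} (h : m.Coprime n) (c : ℤ) :
    numSqrts (m * n) c = numSqrts m c * numSqrts n c := by
  let e := ZMod.chineseRemainder h
  rw [numSqrts, numSqrts, numSqrts, ← Nat.card_prod]
  refine Nat.card_congr ((e.toEquiv.subtypeEquiv fun x => ?_).trans
    (Equiv.subtypeProdEquivProd (p := fun y : ZMod m => y ^ 2 = c)
      (q := fun y : ZMod n => y ^ 2 = c)))
  rw [← e.injective.eq_iff, map_pow, map_intCast, Prod.ext_iff]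
  simp

lemma numSqrts_prime_one {p : ℕ} [Fact p.Prime] (hp : p ≠ 2) : numSqrts p 1 = 2 := by
  have := numSqrts_prime hp 1
  rw [legendreSym.at_one] at this
  omega

lemma numSqrts_neg_one_of_mod_four_eq_three {p : ℕ} [Fact p.Prime] (hp : p % 4 = 3) :
    numSqrts p (-1) = 0 := by
  have := numSqrts_prime (by omega : p ≠ 2) (-1)
  rw [legendreSym.at_neg_one (by omega), ZMod.χ₄_nat_three_mod_four hp] at this
  omega

lemma numSqrts_add_numSqrts_neg_of_mod_four_eq_one {p : ℕ} [Fact p.Prime] (hp : p % 4 = 1)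
    (c : ℤ) : (numSqrts p c + numSqrts p (-c) : ℤ) = 2 * (legendreSym p c + 1) := by
  have hp2 : p ≠ 2 := by omega
  rw [numSqrts_prime hp2, numSqrts_prime hp2, neg_eq_neg_one_mul, legendreSym.mul,
    legendreSym.at_neg_one hp2, ZMod.χ₄_nat_one_mod_four hp]
  ring

lemma numSqrts_add_numSqrts_neg_of_mod_four_eq_three {p : ℕ} [Fact p.Prime] (hp : p % 4 = 3)
    (c : ℤ) : (numSqrts p c + numSqrts p (-c) : ℤ) = 2 := by
  have hp2 : p ≠ 2 := by omega
  rw [numSqrts_prime hp2, numSqrts_prime hp2, neg_eq_neg_one_mul, legendreSym.mul,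
    legendreSym.at_neg_one hp2, ZMod.χ₄_nat_three_mod_four hp]
  ring

lemma ZMod.intCast_sq_eq_intCast_iff_dvd {a B m : ℤ} :
    (B : ZMod a.natAbs) ^ 2 = m ↔ a ∣ m - B ^ 2 := by
  rw [← Int.cast_pow, ZMod.intCast_eq_intCast_iff_dvd_sub, Int.natAbs_dvd]

lemma Int.sum_divisors_eq_sum_natAbs_divisors {M : Type*} [AddCommMonoid M] (z : ℤ)
    (f : ℤ → M) : ∑ a ∈ z.divisors, f a = ∑ d ∈ z.natAbs.divisors, (f d + f (-d)) := by
  rw [Int.divisors, Finset.sum_disjUnion, Finset.sum_map, Finset.sum_map,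
    ← Finset.sum_add_distrib]
  rfl

lemma Nat.Coprime.sum_divisors_mul_eq_sum_sum {M : Type*} [AddCommMonoid M] {m n : ℕ}
    (h : m.Coprime n) (f : ℕ → M) :
    ∑ d ∈ (m * n).divisors, f d = ∑ d ∈ m.divisors, ∑ e ∈ n.divisors, f (d * e) := by
  rw [h.divisors_mul, Finset.sum_map]
  exact (Finset.sum_attach _ fun de => f (de.1 * de.2)).trans (Finset.sum_product _ _ _)

lemma superdisc_two_mul (a B c : ℤ) :
    superdisc (a, 2 * B, c) = 4 * (a * (B ^ 2 - a * c)) := by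
  simp only [superdisc]; ring

lemma superdisc_shift (a b c t : ℤ) :
    superdisc (a, b + 2 * a * t, a * t ^ 2 + b * t + c) = superdisc (a, b, c) := by
  simp only [superdisc]; ring

lemma superdisc_injective {a : ℤ} (ha : a ≠ 0) (b : ℤ) :
    Function.Injective fun c => superdisc (a, b, c) := by
  intro c c' h
  have h' : b ^ 2 - 4 * a * c = b ^ 2 - 4 * a * c' := mul_left_cancel₀ ha h
  exact mul_left_cancel₀ (by positivity : 4 * a ≠ 0) (by linarith)

section EvenQuadratics

variable {N : ℤ}

lemma mem_divisors_and_sq_of_superdisc (hN : N ≠ 0) {p : ℤ × ℤ × ℤ}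
    (hp : superdisc p = 4 * N ∧ 2 ∣ p.2.1) :
    p.1 ∈ N.divisors ∧ ((p.2.1 / 2 : ℤ) : ZMod p.1.natAbs) ^ 2 = (N / p.1 : ℤ) := by
  obtain ⟨a, b, c⟩ := p
  obtain ⟨hsd, B, rfl⟩ := hp
  have hN' : a * (B ^ 2 - a * c) = N := by
    rw [superdisc_two_mul] at hsd; linarith
  subst hN'
  have ha : a ≠ 0 := left_ne_zero_of_mul hN
  refine ⟨Int.mem_divisors.2 ⟨dvd_mul_right _ _, hN⟩, ?_⟩
  dsimp only
  rw [Int.mul_ediv_cancel_left _ two_ne_zero, Int.mul_ediv_cancel_left _ ha,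
    ZMod.intCast_sq_eq_intCast_iff_dvd]
  exact ⟨-c, by ring⟩

def evenQuadToRoot (hN : N ≠ 0)
    (p : {p : ℤ × ℤ × ℤ // superdisc p = 4 * N ∧ 2 ∣ p.2.1}) :
    Σ a : N.divisors, {x : ZMod (a : ℤ).natAbs // x ^ 2 = ((N / a : ℤ) : ZMod _)} :=
  ⟨⟨p.1.1, (mem_divisors_and_sq_of_superdisc hN p.2).1⟩,
    ⟨((p.1.2.1 / 2 : ℤ) : ZMod _), (mem_divisors_and_sq_of_superdisc hN p.2).2⟩⟩

lemma evenQuadToRoot_eq_iff (hN : N ≠ 0)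
    {p q : {p : ℤ × ℤ × ℤ // superdisc p = 4 * N ∧ 2 ∣ p.2.1}} :
    evenQuadToRoot hN p = evenQuadToRoot hN q ↔ quadEquiv p.1 q.1 := by
  obtain ⟨⟨a, b, c⟩, hp⟩ := p
  obtain ⟨⟨a', b', c'⟩, hq⟩ := q
  obtain ⟨B, rfl⟩ := hp.2
  obtain ⟨B', rfl⟩ := hq.2
  have ha : a ≠ 0 := left_ne_zero_of_mul (hp.1.trans_ne (by simpa using hN))
  simp only [evenQuadToRoot, Sigma.mk.inj_iff, Subtype.mk.injEq, quadEquiv, Prod.mk.injEq]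
  constructor
  · rintro ⟨rfl, h⟩
    have hB := congrArg Subtype.val (eq_of_heq h)
    simp only [Int.mul_ediv_cancel_left _ two_ne_zero, ZMod.intCast_eq_intCast_iff_dvd_sub,
      Int.natAbs_dvd] at hB
    obtain ⟨t, ht⟩ := hB
    have hb : 2 * B' = 2 * B + 2 * a * t := by linarith
    refine ⟨t, rfl, hb, superdisc_injective ha (2 * B') ?_⟩
    dsimp only
    rw [hq.1, hb, superdisc_shift, hp.1]
  · rintro ⟨t, rfl, hb, -⟩
    refine ⟨rfl, heq_of_eq (Subtype.ext ?_)⟩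
    simp only [Int.mul_ediv_cancel_left _ two_ne_zero, ZMod.intCast_eq_intCast_iff_dvd_sub,
      Int.natAbs_dvd]
    exact ⟨t, by linarith⟩

lemma evenQuadToRoot_surjective (hN : N ≠ 0) : Function.Surjective (evenQuadToRoot hN) := by
  rintro ⟨⟨a, ha⟩, x, hx⟩
  obtain ⟨B, rfl⟩ := ZMod.intCast_surjective x
  obtain ⟨c, hc⟩ := ZMod.intCast_sq_eq_intCast_iff_dvd.1 hx
  have hN' : a * (N / a) = N := Int.mul_ediv_cancel' (Int.dvd_of_mem_divisors ha)
  refine ⟨⟨(a, 2 * B, -c), ?_, dvd_mul_right 2 B⟩, ?_⟩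
  · rw [superdisc_two_mul]
    linear_combination (-4 * a) * hc + 4 * hN'
  · simp only [evenQuadToRoot, Int.mul_ediv_cancel_left _ two_ne_zero]

theorem quadCount_four_mul_even (hN : N ≠ 0) :
    quadCount (4 * N) (fun p => 2 ∣ p.2.1) = ∑ a ∈ N.divisors, numSqrts a.natAbs (N / a) := by
  have : ∀ a : N.divisors, NeZero (a : ℤ).natAbs :=
    fun a => ⟨Int.natAbs_ne_zero.2 (ne_zero_of_dvd_ne_zero hN (Int.dvd_of_mem_divisors a.2))⟩
  have hbij : Function.Bijective
      (Quot.lift (evenQuadToRoot hN) fun _ _ => (evenQuadToRoot_eq_iff hN).2) :=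
    ⟨by rintro ⟨p⟩ ⟨q⟩ h; exact Quot.sound ((evenQuadToRoot_eq_iff hN).1 h),
      Function.Surjective.of_comp (g := Quot.mk _) (evenQuadToRoot_surjective hN)⟩
  rw [quadCount, Nat.card_eq_of_bijective _ hbij, Nat.card_sigma]
  exact Finset.sum_coe_sort N.divisors fun a => numSqrts a.natAbs (N / a)

end EvenQuadratics

lemma quadCount_four_mul_natCast_even {n : ℕ} (hn : n ≠ 0) :
    quadCount (4 * n) (fun p => 2 ∣ p.2.1) =
      ∑ d ∈ n.divisors, (numSqrts d (n / d : ℕ) + numSqrts d (-(n / d : ℕ) : ℤ)) := by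
  rw [quadCount_four_mul_even (Nat.cast_ne_zero.2 hn), Int.sum_divisors_eq_sum_natAbs_divisors,
    Int.natAbs_natCast]
  refine Finset.sum_congr rfl fun d _ => ?_
  simp only [Int.natAbs_natCast, Int.natAbs_neg, Int.ediv_neg, Int.natCast_div]

/-- For primes `p₁ ≡ 1 (mod 4)` and `p₃ ≡ 3 (mod 4)`, the number of classes of
integer quadratics with `b` even and superdiscriminant `4·p₁·p₃` is
`10 + 2·(p₃/p₁)` (Legendre symbol). -/
theorem quad_count_even_legendre (p₁ p₃ : ℕ) (hp₁ : p₁.Prime) (hp₃ : p₃.Prime)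
    (h₁ : p₁ % 4 = 1) (h₃ : p₃ % 4 = 3) :
    (quadCount (4 * (p₁ : ℤ) * (p₃ : ℤ)) (fun p => 2 ∣ p.2.1) : ℤ)
    = 10 + 2 * @legendreSym p₁ ⟨hp₁⟩ (p₃ : ℤ) := by
  have := Fact.mk hp₁
  have := Fact.mk hp₃
  have hcop : p₁.Coprime p₃ := (Nat.coprime_primes hp₁ hp₃).2 (by omega)
  have hcount := quadCount_four_mul_natCast_even (mul_ne_zero hp₁.ne_zero hp₃.ne_zero)
  rw [Nat.cast_mul, ← mul_assoc, hcop.sum_divisors_mul_eq_sum_sum, hp₁.divisors,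
    hp₃.divisors, Finset.sum_pair hp₁.one_lt.ne, Finset.sum_pair hp₃.one_lt.ne,
    Finset.sum_pair hp₃.one_lt.ne] at hcount
  rw [hcount]
  simp only [one_mul, mul_one, Nat.div_one, Nat.div_self (mul_pos hp₁.pos hp₃.pos),
    Nat.mul_div_cancel _ hp₃.pos, Nat.mul_div_cancel_left _ hp₁.pos, Nat.cast_one]
  rw [numSqrts_one, numSqrts_one, numSqrts_mul hcop, numSqrts_mul hcop,
    numSqrts_prime_one (by omega), numSqrts_prime_one (by omega),
    numSqrts_neg_one_of_mod_four_eq_three h₃]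
  push_cast
  linear_combination numSqrts_add_numSqrts_neg_of_mod_four_eq_three h₃ p₁ +
    numSqrts_add_numSqrts_neg_of_mod_four_eq_one h₁ p₃
end

section
/- Let A be a discrete valuation ring with fraction field K and u_1,u_2,u_3,v_1,v_2,v_3 ∈ K with D = det[(1,1,1);(u_1,u_2,u_3);(v_1,v_2,v_3)] ≠ 0. If a = (1/D)(u_1-u_2)(u_2-u_3)(u_3-u_1) ∈ A and d = (1/D)(v_1-v_2)(v_2-v_3)(v_3-v_1) ∈ A, and u_i, v_i are all in A, then b = (1/D)·Σ_{i=1}^{3}(u_i-u_{i+1})(u_{i+1}-u_{i+2})(v_{i+2}-v_i) ∈ A. -/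
/-!
With `cᵢ = uᵢ - 2uᵢ₊₁ + uᵢ₊₂` and `rᵢ = (1/D)(uᵢ - uᵢ₊₁)(uᵢ₊₁ - uᵢ₊₂)(vᵢ₊₂ - vᵢ)`, one has the
identities `b + cᵢ = 3rᵢ` and `r₁r₂r₃ = a²d`. Hence `b` is a root of the monic cubic
`(X + c₁)(X + c₂)(X + c₃) - 27a²d` with coefficients in `A`, so it is integral over `A` and
lies in `A` because a discrete valuation ring is integrally closed.
-/

open Polynomial

theorem isIntegral_of_prod_add_algebraMap_eq {R S ι : Type*} [CommRing R] [CommRing S]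
    [Algebra R S] {s : Finset ι} (hs : s.Nonempty) (c : ι → R) (e : R) {x : S}
    (h : ∏ i ∈ s, (x + algebraMap R S (c i)) = algebraMap R S e) : IsIntegral R x := by
  nontriviality R
  have hmonic : (∏ i ∈ s, (X + C (c i))).Monic :=
    monic_prod_of_monic _ _ fun i _ => monic_X_add_C (c i)
  have hdeg : (∏ i ∈ s, (X + C (c i))).natDegree = s.card := by
    simp [natDegree_prod_of_monic _ _ fun i _ => monic_X_add_C (c i)]
  refine ⟨∏ i ∈ s, (X + C (c i)) - C e, hmonic.sub_of_left ?_, ?_⟩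
  · rw [degree_eq_natDegree hmonic.ne_zero, hdeg]
    exact degree_C_le.trans_lt (by exact_mod_cast hs.card_pos)
  · simp [eval₂_finsetProd, h]

section CommRing

variable {R : Type*} [CommRing R] (x₁ x₂ x₃ y₁ y₂ y₃ : R)

def onesRowDet : R :=
  Matrix.det !![1, 1, 1; x₁, x₂, x₃; y₁, y₂, y₃]

def cubicMiddleNum : R :=
  (x₁ - x₂) * (x₂ - x₃) * (y₃ - y₁) + (x₂ - x₃) * (x₃ - x₁) * (y₁ - y₂)
    + (x₃ - x₁) * (x₁ - x₂) * (y₂ - y₃)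

theorem onesRowDet_eq :
    onesRowDet x₁ x₂ x₃ y₁ y₂ y₃ = (x₂ - x₁) * (y₃ - y₁) - (x₃ - x₁) * (y₂ - y₁) := by
  simp only [onesRowDet, Matrix.det_fin_three, Matrix.of_apply, Matrix.cons_val',
    Matrix.cons_val_zero, Matrix.cons_val_fin_one, Matrix.cons_val_one, Matrix.cons_val, one_mul]
  ring

theorem onesRowDet_rotate :
    onesRowDet x₂ x₃ x₁ y₂ y₃ y₁ = onesRowDet x₁ x₂ x₃ y₁ y₂ y₃ := by
  rw [onesRowDet_eq, onesRowDet_eq]; ring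

theorem cubicMiddleNum_rotate :
    cubicMiddleNum x₂ x₃ x₁ y₂ y₃ y₁ = cubicMiddleNum x₁ x₂ x₃ y₁ y₂ y₃ := by
  unfold cubicMiddleNum; ring

theorem cubicMiddleNum_add_mul_onesRowDet :
    cubicMiddleNum x₁ x₂ x₃ y₁ y₂ y₃ + (x₁ - 2 * x₂ + x₃) * onesRowDet x₁ x₂ x₃ y₁ y₂ y₃
      = 3 * ((x₁ - x₂) * (x₂ - x₃) * (y₃ - y₁)) := by
  rw [onesRowDet_eq, cubicMiddleNum]; ring

theorem prod_cubicMiddleNum_add_mul_onesRowDet :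
    (cubicMiddleNum x₁ x₂ x₃ y₁ y₂ y₃ + (x₁ - 2 * x₂ + x₃) * onesRowDet x₁ x₂ x₃ y₁ y₂ y₃)
        * (cubicMiddleNum x₁ x₂ x₃ y₁ y₂ y₃ + (x₂ - 2 * x₃ + x₁) * onesRowDet x₁ x₂ x₃ y₁ y₂ y₃)
        * (cubicMiddleNum x₁ x₂ x₃ y₁ y₂ y₃ + (x₃ - 2 * x₁ + x₂) * onesRowDet x₁ x₂ x₃ y₁ y₂ y₃)
      = 27 * ((x₁ - x₂) * (x₂ - x₃) * (x₃ - x₁)) ^ 2 * ((y₁ - y₂) * (y₂ - y₃) * (y₃ - y₁)) := by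
  have h₂ := cubicMiddleNum_add_mul_onesRowDet x₂ x₃ x₁ y₂ y₃ y₁
  have h₃ := cubicMiddleNum_add_mul_onesRowDet x₃ x₁ x₂ y₃ y₁ y₂
  rw [cubicMiddleNum_rotate, onesRowDet_rotate] at h₂
  rw [← cubicMiddleNum_rotate, onesRowDet_rotate, onesRowDet_rotate] at h₃
  rw [cubicMiddleNum_add_mul_onesRowDet, h₂, h₃]
  ring

end CommRing

theorem prod_middleCoeff_add {K : Type*} [Field K] (x₁ x₂ x₃ y₁ y₂ y₃ : K)
    (hD : onesRowDet x₁ x₂ x₃ y₁ y₂ y₃ ≠ 0) :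
    (1 / onesRowDet x₁ x₂ x₃ y₁ y₂ y₃ * cubicMiddleNum x₁ x₂ x₃ y₁ y₂ y₃ + (x₁ - 2 * x₂ + x₃))
        * (1 / onesRowDet x₁ x₂ x₃ y₁ y₂ y₃ * cubicMiddleNum x₁ x₂ x₃ y₁ y₂ y₃
          + (x₂ - 2 * x₃ + x₁))
        * (1 / onesRowDet x₁ x₂ x₃ y₁ y₂ y₃ * cubicMiddleNum x₁ x₂ x₃ y₁ y₂ y₃
          + (x₃ - 2 * x₁ + x₂))
      = 27 * (1 / onesRowDet x₁ x₂ x₃ y₁ y₂ y₃ * ((x₁ - x₂) * (x₂ - x₃) * (x₃ - x₁))) ^ 2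
          * (1 / onesRowDet x₁ x₂ x₃ y₁ y₂ y₃ * ((y₁ - y₂) * (y₂ - y₃) * (y₃ - y₁))) := by
  have key := prod_cubicMiddleNum_add_mul_onesRowDet x₁ x₂ x₃ y₁ y₂ y₃
  generalize onesRowDet x₁ x₂ x₃ y₁ y₂ y₃ = D at hD key ⊢
  generalize cubicMiddleNum x₁ x₂ x₃ y₁ y₂ y₃ = N at key ⊢
  field_simp
  linear_combination key

/-- Integrality of the middle coefficient: if `u₁,u₂,u₃,v₁,v₂,v₃` lie in a
discrete valuation ring `A` with fraction field `K`, `D` (the determinant of the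
matrix with rows `(1,1,1)`, `(uᵢ)`, `(vᵢ)`) is nonzero, and the outer coefficients
`a = (1/D)(u₁-u₂)(u₂-u₃)(u₃-u₁)` and `d = (1/D)(v₁-v₂)(v₂-v₃)(v₃-v₁)` lie in `A`,
then so does `b = (1/D)·Σᵢ (uᵢ-uᵢ₊₁)(uᵢ₊₁-uᵢ₊₂)(vᵢ₊₂-vᵢ)` (indices mod 3). -/
theorem cubic_middle_coeff_integral
    (A : Type*) [CommRing A] [IsDomain A] [IsDiscreteValuationRing A]
    (K : Type*) [Field K] [Algebra A K] [IsFractionRing A K]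
    (u₁ u₂ u₃ v₁ v₂ v₃ : A)
    (D : K)
    (hD : D = Matrix.det !![(1 : K), 1, 1;
        algebraMap A K u₁, algebraMap A K u₂, algebraMap A K u₃;
        algebraMap A K v₁, algebraMap A K v₂, algebraMap A K v₃])
    (hD0 : D ≠ 0)
    (ha : (1 / D) * ((algebraMap A K u₁ - algebraMap A K u₂)
        * (algebraMap A K u₂ - algebraMap A K u₃)
        * (algebraMap A K u₃ - algebraMap A K u₁)) ∈ (algebraMap A K).range)
    (hd : (1 / D) * ((algebraMap A K v₁ - algebraMap A K v₂)
        * (algebraMap A K v₂ - algebraMap A K v₃)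
        * (algebraMap A K v₃ - algebraMap A K v₁)) ∈ (algebraMap A K).range) :
    (1 / D) * ((algebraMap A K u₁ - algebraMap A K u₂)
        * (algebraMap A K u₂ - algebraMap A K u₃)
        * (algebraMap A K v₃ - algebraMap A K v₁)
      + (algebraMap A K u₂ - algebraMap A K u₃)
        * (algebraMap A K u₃ - algebraMap A K u₁)
        * (algebraMap A K v₁ - algebraMap A K v₂)
      + (algebraMap A K u₃ - algebraMap A K u₁)
        * (algebraMap A K u₁ - algebraMap A K u₂)
        * (algebraMap A K v₂ - algebraMap A K v₃)) ∈ (algebraMap A K).range := by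
  obtain ⟨a, ha⟩ := ha
  obtain ⟨d, hd⟩ := hd
  subst hD
  refine IsIntegrallyClosed.isIntegral_iff.mp <| isIntegral_of_prod_add_algebraMap_eq
    Finset.univ_nonempty ![u₁ - 2 * u₂ + u₃, u₂ - 2 * u₃ + u₁, u₃ - 2 * u₁ + u₂]
    (27 * a ^ 2 * d) ?_
  simp only [Fin.prod_univ_three, Matrix.cons_val_zero, Matrix.cons_val_one, Matrix.cons_val_two,
    Matrix.head_cons, Matrix.tail_cons, map_add, map_sub, map_mul, map_pow, map_ofNat, ha, hd]
  exact prod_middleCoeff_add _ _ _ _ _ _ hD0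
end

section
/- Let A be a Dedekind domain with fraction field K, char K ≠ 2,3, and let L be a nondegenerate (étale) cubic K-algebra. Let ξ, η ∈ L be integral over A such that C = A·1 + A·ξ + A·η is a full-rank lattice in L. If the outer coefficients of the index form of C with respect to the basis (1, ξ, η) are both in A, then the entire index form is integral and C is a subring of L. -/
/-!
Write `ξ² = p + qξ + rη`, `ξη = l + mξ + nη`, `η² = u + vξ + wη`. The index form is
`r x³ + (2n - q) x²y + (w - 2m) xy² - v y³`, so the hypothesis says `r, v ∈ A`. Comparing
`ξ(ξη) = ξ²η` gives `l = rv - mn`, hence the characteristic polynomial `χ` of multiplication by `ξ`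
satisfies `χ(n) = -r²v ∈ A`. As `ξ` is integral and `A` is integrally closed, `χ` is a monic
polynomial over `A`, so `n ∈ A`; exchanging `ξ` and `η` gives `m ∈ A`. The traces of `ξ` and `η`
then give `q, w ∈ A`, and associativity gives `l, p, u ∈ A`. So all structure constants of
`(1, ξ, η)` lie in `A`, which makes the index form integral and `A⟨1, ξ, η⟩` a ring.
-/

/-- The index form of the lattice `C = A⟨1, ξ, η⟩` in a cubic algebra `L` with
`K`-basis `b = (1, ξ, η)`: `Φ(x,y)` is the determinant of the matrix whose rows
are the coordinates of `1, z, z²` for `z = x·ξ + y·η` (i.e. `1 ∧ z ∧ z²`). -/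
noncomputable def indexForm {K L : Type*} [Field K] [CommRing L] [Algebra K L]
    (b : Module.Basis (Fin 3) K L) (ξ η : L) (x y : K) : K :=
  Matrix.det (Matrix.of fun i j : Fin 3 => b.repr ((x • ξ + y • η) ^ (i : ℕ)) j)

open Polynomial

theorem Matrix.isIntegral_charpoly_coeff {A K n : Type*} [CommRing A] [Field K] [Algebra A K]
    [Fintype n] [DecidableEq n] {M : Matrix n n K} (hM : IsIntegral A M) (k : ℕ) :
    IsIntegral A (M.charpoly.coeff k) := by
  let φ := IsScalarTower.toAlgHom A K (AlgebraicClosure K)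
  rw [← isIntegral_algHom_iff φ (algebraMap K _).injective, IsScalarTower.coe_toAlgHom',
    ← coeff_map, ← charpoly_map]
  refine isIntegral_coeff_of_factors _
    (by rw [(charpoly_monic _).leadingCoeff]; exact isIntegral_one) (IsAlgClosed.splits _)
    (fun r hr => ?_) k
  cases isEmpty_or_nonempty n
  · simp [charpoly_isEmpty] at hr
  obtain ⟨f, hf, hfM⟩ := hM
  have hfφ : aeval (φ.mapMatrix M) (f.map (algebraMap A (AlgebraicClosure K))) = 0 := by
    rw [aeval_map_algebraMap, aeval_algHom_apply, aeval_def, hfM, map_zero]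
  -- eigenvalues of `M` are roots of every polynomial annihilating `M`
  have := spectrum.subset_polynomial_aeval (φ.mapMatrix M) (f.map (algebraMap A _))
    ⟨r, mem_spectrum_of_isRoot_charpoly hr, rfl⟩
  rw [hfφ, spectrum.zero_eq] at this
  exact ⟨f, hf, by simpa [eval_map_algebraMap, aeval_def] using this⟩

theorem Algebra.isIntegral_leftMulMatrix {A K L ι : Type*} [CommRing A] [Field K] [CommRing L]
    [Algebra A K] [Algebra K L] [Algebra A L] [IsScalarTower A K L] [Fintype ι] [DecidableEq ι]
    (b : Module.Basis ι K L) {x : L} (hx : IsIntegral A x) :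
    IsIntegral A (Algebra.leftMulMatrix b x) :=
  hx.map ((Algebra.leftMulMatrix b).restrictScalars A)

namespace Module.Basis

section StructConst

variable {ι ι' A K L : Type*} [Field K] [CommRing L] [Algebra K L]

noncomputable def structConst (b : Basis ι K L) (i j k : ι) : K := b.repr (b i * b j) k

variable (b : Basis ι K L)

@[simp]
theorem repr_basis_mul_basis (i j k : ι) : b.repr (b i * b j) k = b.structConst i j k := rfl

theorem structConst_comm (i j k : ι) : b.structConst i j k = b.structConst j i k := by
  rw [structConst, structConst, mul_comm]

theorem structConst_of_eq_one_right {i₀ : ι} (h : b i₀ = 1) (i k : ι) :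
    b.structConst i i₀ k = Finsupp.single i 1 k := by
  rw [structConst, h, mul_one, repr_self]

theorem structConst_of_eq_one_left {i₀ : ι} (h : b i₀ = 1) (i k : ι) :
    b.structConst i₀ i k = Finsupp.single i 1 k := by
  rw [structConst_comm, b.structConst_of_eq_one_right h]

theorem structConst_reindex (e : ι ≃ ι') (i j k : ι') :
    (b.reindex e).structConst i j k = b.structConst (e.symm i) (e.symm j) (e.symm k) := by
  simp only [structConst, reindex_apply, repr_reindex_apply]

theorem structConst_mem_range_of_eq_one [CommRing A] [Algebra A K] {i₀ : ι} (h : b i₀ = 1)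
    (i k : ι) : b.structConst i i₀ k ∈ (algebraMap A K).range := by
  classical
  rw [b.structConst_of_eq_one_right h, Finsupp.single_apply]
  split_ifs
  exacts [one_mem _, zero_mem _]

variable [Fintype ι]

open scoped Pointwise in
theorem mul_mem_span_of_structConst_mem_range [CommRing A] [Algebra A K] [Algebra A L]
    [IsScalarTower A K L] (h : ∀ i j k, b.structConst i j k ∈ (algebraMap A K).range) {u v : L}
    (hu : u ∈ Submodule.span A (Set.range b)) (hv : v ∈ Submodule.span A (Set.range b)) :
    u * v ∈ Submodule.span A (Set.range b) := by
  have hbasis (i j : ι) : b i * b j ∈ Submodule.span A (Set.range b) := by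
    rw [← b.sum_repr (b i * b j)]
    refine Submodule.sum_mem _ fun k _ => ?_
    obtain ⟨a, ha⟩ := h i j k
    rw [repr_basis_mul_basis, ← ha, algebraMap_smul]
    exact Submodule.smul_mem _ _ (Submodule.subset_span ⟨k, rfl⟩)
  have huv := Submodule.mul_mem_mul hu hv
  rw [Submodule.span_mul_span] at huv
  refine Submodule.span_le.mpr (Set.mul_subset_iff.mpr ?_) huv
  rintro _ ⟨i, rfl⟩ _ ⟨j, rfl⟩
  exact hbasis i j

variable [DecidableEq ι]

theorem leftMulMatrix_basis_apply (i j k : ι) :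
    Algebra.leftMulMatrix b (b i) k j = b.structConst i j k :=
  Algebra.leftMulMatrix_eq_repr_mul b _ k j

theorem repr_basis_mul (i k : ι) (z : L) :
    b.repr (b i * z) k = ∑ j, b.structConst i j k * b.repr z j := by
  rw [← Algebra.leftMulMatrix_mulVec_repr, Matrix.mulVec, dotProduct]
  simp only [leftMulMatrix_basis_apply]

theorem structConst_assoc (i j k m : ι) :
    ∑ l, b.structConst j k l * b.structConst i l m =
      ∑ l, b.structConst i j l * b.structConst l k m := by
  have h := congrArg (b.repr · m) (mul_rotate' (b k) (b i) (b j))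
  rw [repr_basis_mul, repr_basis_mul] at h
  change ∑ l, b.structConst k l m * b.structConst i j l
    = ∑ l, b.structConst i l m * b.structConst j k l at h
  simp only [structConst_comm b k, mul_comm (b.structConst _ _ m)] at h
  exact h.symm

end StructConst

section Cubic

variable {A K L : Type*} [Field K] [CommRing L] [Algebra K L] (b : Basis (Fin 3) K L)

theorem structConst_one_two_zero (hb0 : b 0 = 1) :
    b.structConst 1 2 0 =
      b.structConst 1 1 2 * b.structConst 2 2 1 - b.structConst 1 2 1 * b.structConst 1 2 2 := by
  have := b.structConst_assoc 1 1 2 1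
  simp only [Fin.sum_univ_three, b.structConst_of_eq_one_left hb0,
    b.structConst_of_eq_one_right hb0, Finsupp.single_apply, Fin.reduceEq, ↓reduceIte] at this
  linear_combination this

theorem structConst_one_one_zero (hb0 : b 0 = 1) :
    b.structConst 1 1 0 = b.structConst 1 1 2 * b.structConst 1 2 1 + b.structConst 1 2 2 ^ 2
      - b.structConst 1 1 1 * b.structConst 1 2 2 - b.structConst 1 1 2 * b.structConst 2 2 2 := by
  have := b.structConst_assoc 1 1 2 2
  simp only [Fin.sum_univ_three, b.structConst_of_eq_one_left hb0,
    b.structConst_of_eq_one_right hb0, Finsupp.single_apply, Fin.reduceEq, ↓reduceIte] at this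
  linear_combination -this

theorem eval_charpoly_leftMulMatrix_basis_one (hb0 : b 0 = 1) :
    (Algebra.leftMulMatrix b (b 1)).charpoly.eval (b.structConst 1 2 2) =
      -b.structConst 1 1 2 ^ 2 * b.structConst 2 2 1 := by
  rw [Matrix.eval_charpoly, Matrix.det_fin_three]
  simp only [Matrix.scalar_apply, Matrix.sub_apply, Matrix.diagonal_apply,
    leftMulMatrix_basis_apply, b.structConst_of_eq_one_right hb0, Finsupp.single_apply,
    Fin.reduceEq, ↓reduceIte, b.structConst_one_two_zero hb0]
  ring

theorem trace_leftMulMatrix_basis_one (hb0 : b 0 = 1) :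
    (Algebra.leftMulMatrix b (b 1)).trace = b.structConst 1 1 1 + b.structConst 1 2 2 := by
  simp [Matrix.trace_fin_three, leftMulMatrix_basis_apply, b.structConst_of_eq_one_right hb0]

theorem indexForm_eq (hb0 : b 0 = 1) (x y : K) :
    indexForm b (b 1) (b 2) x y =
      b.structConst 1 1 2 * x ^ 3 + (2 * b.structConst 1 2 2 - b.structConst 1 1 1) * x ^ 2 * y
        + (b.structConst 2 2 2 - 2 * b.structConst 1 2 1) * x * y ^ 2
        - b.structConst 2 2 1 * y ^ 3 := by
  have hsq : (x • b 1 + y • b 2) ^ 2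
      = (x * x) • (b 1 * b 1) + (2 * x * y) • (b 1 * b 2) + (y * y) • (b 2 * b 2) := by
    simp only [sq, add_mul, mul_add, smul_mul_smul_comm, mul_comm (b 2) (b 1)]
    module
  rw [indexForm, Matrix.det_fin_three]
  simp only [Matrix.of_apply, Fin.val_zero, Fin.val_one, Fin.val_two, pow_zero, pow_one, hsq,
    ← hb0, map_add, map_smul, repr_self, repr_basis_mul_basis, Finsupp.add_apply,
    Finsupp.smul_apply, Finsupp.single_apply, Fin.reduceEq, ↓reduceIte, smul_eq_mul]
  ring

theorem structConst_mem_range_of_rows [CommRing A] [Algebra A K] (hb0 : b 0 = 1)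
    (h11 : ∀ k, b.structConst 1 1 k ∈ (algebraMap A K).range)
    (h12 : ∀ k, b.structConst 1 2 k ∈ (algebraMap A K).range)
    (h22 : ∀ k, b.structConst 2 2 k ∈ (algebraMap A K).range) (i j k : Fin 3) :
    b.structConst i j k ∈ (algebraMap A K).range := by
  have h0 := b.structConst_mem_range_of_eq_one (A := A) hb0
  fin_cases i <;> fin_cases j
  exacts [h0 0 k, b.structConst_comm 0 1 k ▸ h0 1 k, b.structConst_comm 0 2 k ▸ h0 2 k,
    h0 1 k, h11 k, h12 k, h0 2 k, b.structConst_comm 1 2 k ▸ h12 k, h22 k]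

variable [CommRing A] [IsIntegrallyClosed A] [Algebra A K] [IsFractionRing A K] [Algebra A L]
  [IsScalarTower A K L]

theorem structConst_one_two_two_mem_range (hb0 : b 0 = 1) (h1 : IsIntegral A (b 1))
    (hr : b.structConst 1 1 2 ∈ (algebraMap A K).range)
    (hv : b.structConst 2 2 1 ∈ (algebraMap A K).range) :
    b.structConst 1 2 2 ∈ (algebraMap A K).range := by
  obtain ⟨e, he⟩ : -b.structConst 1 1 2 ^ 2 * b.structConst 2 2 1 ∈ (algebraMap A K).range :=
    mul_mem (neg_mem (pow_mem hr 2)) hv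
  refine IsIntegrallyClosed.isIntegral_iff.mp <| .of_aeval_monic_of_isIntegral_coeff
    (Matrix.charpoly_monic _) (by simp) ?_
    (Matrix.isIntegral_charpoly_coeff (Algebra.isIntegral_leftMulMatrix b h1))
  rw [eval_charpoly_leftMulMatrix_basis_one b hb0, ← he]
  exact isIntegral_algebraMap

theorem structConst_one_one_one_mem_range (hb0 : b 0 = 1) (h1 : IsIntegral A (b 1))
    (hn : b.structConst 1 2 2 ∈ (algebraMap A K).range) :
    b.structConst 1 1 1 ∈ (algebraMap A K).range := by
  have htr : (Algebra.leftMulMatrix b (b 1)).trace ∈ (algebraMap A K).range := by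
    refine IsIntegrallyClosed.isIntegral_iff.mp ?_
    rw [Matrix.trace_eq_neg_charpoly_coeff]
    exact (Matrix.isIntegral_charpoly_coeff (Algebra.isIntegral_leftMulMatrix b h1) _).neg
  rw [trace_leftMulMatrix_basis_one b hb0] at htr
  simpa using sub_mem htr hn

theorem structConst_mem_range (hb0 : b 0 = 1) (h1 : IsIntegral A (b 1))
    (h2 : IsIntegral A (b 2)) (hr : b.structConst 1 1 2 ∈ (algebraMap A K).range)
    (hv : b.structConst 2 2 1 ∈ (algebraMap A K).range) (i j k : Fin 3) :
    b.structConst i j k ∈ (algebraMap A K).range := by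
  set b' := b.reindex (Equiv.swap 1 2)
  have hb'0 : b' 0 = 1 := by simp [b', hb0, Equiv.swap_apply_of_ne_of_ne]
  have hb' (i j k : Fin 3) : b'.structConst i j k =
      b.structConst (Equiv.swap 1 2 i) (Equiv.swap 1 2 j) (Equiv.swap 1 2 k) := by
    simp [b', structConst_reindex]
  have h2' : IsIntegral A (b' 1) := by simpa [b'] using h2
  have hn := b.structConst_one_two_two_mem_range hb0 h1 hr hv
  have hm : b.structConst 1 2 1 ∈ (algebraMap A K).range := by
    have := b'.structConst_one_two_two_mem_range hb'0 h2' (by simpa [hb'] using hv)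
      (by simpa [hb'] using hr)
    rwa [hb', structConst_comm] at this
  have hq := b.structConst_one_one_one_mem_range hb0 h1 hn
  have hw : b.structConst 2 2 2 ∈ (algebraMap A K).range := by
    simpa [hb'] using
      b'.structConst_one_one_one_mem_range hb'0 h2' (by rwa [hb', structConst_comm])
  have hl : b.structConst 1 2 0 ∈ (algebraMap A K).range := by
    rw [b.structConst_one_two_zero hb0]
    exact sub_mem (mul_mem hr hv) (mul_mem hm hn)
  have hp : b.structConst 1 1 0 ∈ (algebraMap A K).range := by
    rw [b.structConst_one_one_zero hb0]
    exact sub_mem (sub_mem (add_mem (mul_mem hr hm) (pow_mem hn 2)) (mul_mem hq hn))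
      (mul_mem hr hw)
  have hu : b.structConst 2 2 0 ∈ (algebraMap A K).range := by
    have := b'.structConst_one_one_zero hb'0
    simp only [hb', Equiv.swap_apply_left, Equiv.swap_apply_right,
      Equiv.swap_apply_of_ne_of_ne (show (0 : Fin 3) ≠ 1 by decide)
        (show (0 : Fin 3) ≠ 2 by decide)] at this
    rw [this]
    simp only [structConst_comm b 2 1]
    exact sub_mem (sub_mem (add_mem (mul_mem hv hn) (pow_mem hm 2)) (mul_mem hw hm))
      (mul_mem hv hq)
  refine b.structConst_mem_range_of_rows hb0 (fun k => ?_) (fun k => ?_) (fun k => ?_) i j k <;>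
    fin_cases k
  exacts [hp, hq, hr, hl, hm, hn, hu, hv, hw]

end Cubic

end Module.Basis

theorem cubic_lattice_ring_of_outer_coefficients_general
    (A : Type*) [CommRing A] [IsDedekindDomain A]
    (K : Type*) [Field K] [Algebra A K] [IsFractionRing A K]
    (L : Type*) [CommRing L] [Algebra K L] [Algebra A L] [IsScalarTower A K L]
    (b : Module.Basis (Fin 3) K L) (ξ η : L)
    (hb0 : b 0 = 1) (hb1 : b 1 = ξ) (hb2 : b 2 = η)
    (hξ : IsIntegral A ξ) (hη : IsIntegral A η)
    (ha : indexForm b ξ η 1 0 ∈ (algebraMap A K).range)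
    (hd : indexForm b ξ η 0 1 ∈ (algebraMap A K).range) :
    (∃ a₀ b₀ c₀ d₀ : A, ∀ x y : K,
        indexForm b ξ η x y
          = algebraMap A K a₀ * x ^ 3 + algebraMap A K b₀ * x ^ 2 * y
            + algebraMap A K c₀ * x * y ^ 2 + algebraMap A K d₀ * y ^ 3) ∧
    (∀ u ∈ Submodule.span A ({1, ξ, η} : Set L),
      ∀ v ∈ Submodule.span A ({1, ξ, η} : Set L),
        u * v ∈ Submodule.span A ({1, ξ, η} : Set L)) := by
  subst hb1 hb2
  have hr : b.structConst 1 1 2 ∈ (algebraMap A K).range := by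
    simpa [b.indexForm_eq hb0] using ha
  have hv : b.structConst 2 2 1 ∈ (algebraMap A K).range := by
    simpa [b.indexForm_eq hb0] using neg_mem hd
  choose c hc using b.structConst_mem_range hb0 hξ hη hr hv
  have hrange : Set.range b = {1, b 1, b 2} := by
    rw [← hb0]
    ext
    simp [Fin.exists_fin_succ, eq_comm]
  refine ⟨⟨c 1 1 2, 2 * c 1 2 2 - c 1 1 1, c 2 2 2 - 2 * c 1 2 1, -c 2 2 1, fun x y => ?_⟩, ?_⟩
  · simp only [b.indexForm_eq hb0, map_sub, map_mul, map_neg, map_ofNat, hc]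
    ring
  · rw [← hrange]
    exact fun u hu v hv =>
      b.mul_mem_span_of_structConst_mem_range (fun i j k => ⟨_, hc i j k⟩) hu hv

/-- If the outer coefficients of the index form of `C = A⟨1, ξ, η⟩` are integral,
then the whole index form has coefficients in `A` and `C` is a subring. -/
theorem cubic_lattice_ring_of_outer_coefficients
    (A : Type*) [CommRing A] [IsDomain A] [IsDedekindDomain A]
    (K : Type*) [Field K] [Algebra A K] [IsFractionRing A K]
    (h2 : (2 : K) ≠ 0) (h3 : (3 : K) ≠ 0)
    (L : Type*) [CommRing L] [Algebra K L] [Algebra A L] [IsScalarTower A K L]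
    [Algebra.IsSeparable K L]
    (b : Module.Basis (Fin 3) K L) (ξ η : L)
    (hb0 : b 0 = 1) (hb1 : b 1 = ξ) (hb2 : b 2 = η)
    (hξ : IsIntegral A ξ) (hη : IsIntegral A η)
    (ha : indexForm b ξ η 1 0 ∈ (algebraMap A K).range)
    (hd : indexForm b ξ η 0 1 ∈ (algebraMap A K).range) :
    (∃ a₀ b₀ c₀ d₀ : A, ∀ x y : K,
        indexForm b ξ η x y
          = algebraMap A K a₀ * x ^ 3 + algebraMap A K b₀ * x ^ 2 * y
            + algebraMap A K c₀ * x * y ^ 2 + algebraMap A K d₀ * y ^ 3) ∧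
    (∀ u ∈ Submodule.span A ({1, ξ, η} : Set L),
      ∀ v ∈ Submodule.span A ({1, ξ, η} : Set L),
        u * v ∈ Submodule.span A ({1, ξ, η} : Set L)) :=
  cubic_lattice_ring_of_outer_coefficients_general A K L b ξ η hb0 hb1 hb2 hξ hη ha hd
end

section
/- Let A be a principal ideal domain of characteristic ≠ 3. The binary cubic form f(x,y) = ax^3 + bx^2y + cxy^2 + dy^3 over A is the index form of a unique cubic A-algebra C = A·1 ⊕ A·ξ ⊕ A·η with multiplication table ξη = -ad, ξ^2 = -ac + bξ - aη, η^2 = -bd + dξ - cη, and this C is a commutative associative A-algebra. -/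
/-!
Commutativity, associativity, the unit law, bilinearity and the index form are all polynomial
identities in the coordinates of `A³`. Uniqueness holds because a bilinear map on `A³` is
determined by its values on pairs of basis vectors, and the unit laws together with the table
fix all nine of them.
-/

/-- The multiplication on `A³ = A·1 ⊕ A·ξ ⊕ A·η` determined by the table
`ξη = -ad`, `ξ² = -ac + bξ - aη`, `η² = -bd + dξ - cη`, extended `A`-bilinearly.
An element `(p, q, r)` represents `p + q·ξ + r·η`. -/
def cubicMul {A : Type*} [CommRing A] (a b c d : A) :
    A × A × A → A × A × A → A × A × A := fun p q =>
  (p.1 * q.1 - a * c * (p.2.1 * q.2.1) - b * d * (p.2.2 * q.2.2)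
      - a * d * (p.2.1 * q.2.2 + p.2.2 * q.2.1),
    p.1 * q.2.1 + p.2.1 * q.1 + b * (p.2.1 * q.2.1) + d * (p.2.2 * q.2.2),
    p.1 * q.2.2 + p.2.2 * q.1 - a * (p.2.1 * q.2.1) - c * (p.2.2 * q.2.2))

section
variable {A : Type*} [CommRing A] (a b c d : A)

theorem cubicMul_comm (p q : A × A × A) : cubicMul a b c d p q = cubicMul a b c d q p := by
  simp only [cubicMul, Prod.mk.injEq]
  refine ⟨by ring, by ring, by ring⟩

theorem cubicMul_assoc (p q r : A × A × A) :
    cubicMul a b c d (cubicMul a b c d p q) r = cubicMul a b c d p (cubicMul a b c d q r) := by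
  simp only [cubicMul, Prod.mk.injEq]
  refine ⟨by ring, by ring, by ring⟩

theorem cubicMul_one_left (p : A × A × A) : cubicMul a b c d (1, 0, 0) p = p := by
  simp [cubicMul]

theorem cubicMul_add_left (p q r : A × A × A) :
    cubicMul a b c d (p + q) r = cubicMul a b c d p r + cubicMul a b c d q r := by
  simp only [cubicMul, Prod.fst_add, Prod.snd_add, Prod.mk_add_mk, Prod.mk.injEq]
  refine ⟨by ring, by ring, by ring⟩

theorem cubicMul_smul_left (s : A) (p q : A × A × A) :
    cubicMul a b c d (s • p) q = s • cubicMul a b c d p q := by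
  simp only [cubicMul, Prod.smul_fst, Prod.smul_snd, Prod.smul_mk, smul_eq_mul, Prod.mk.injEq]
  refine ⟨by ring, by ring, by ring⟩

theorem cubicMul_indexForm (x y : A) :
    (cubicMul a b c d (0, x, y) (0, x, y)).2.1 * y
        - (cubicMul a b c d (0, x, y) (0, x, y)).2.2 * x
      = a * x ^ 3 + b * x ^ 2 * y + c * x * y ^ 2 + d * y ^ 3 := by
  simp only [cubicMul]
  ring

def cubicMulBilin : (A × A × A) →ₗ[A] (A × A × A) →ₗ[A] (A × A × A) :=
  LinearMap.mk₂ A (cubicMul a b c d) (cubicMul_add_left a b c d) (cubicMul_smul_left a b c d)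
    (fun p q r => by simp only [cubicMul_comm a b c d p, cubicMul_add_left])
    (fun s p q => by simp only [cubicMul_comm a b c d p, cubicMul_smul_left])

theorem eq_cubicMul_of_table (mul' : A × A × A → A × A × A → A × A × A)
    (add_left : ∀ p q r, mul' (p + q) r = mul' p r + mul' q r)
    (add_right : ∀ p q r, mul' p (q + r) = mul' p q + mul' p r)
    (smul_left : ∀ (s : A) p q, mul' (s • p) q = s • mul' p q)
    (smul_right : ∀ (s : A) p q, mul' p (s • q) = s • mul' p q)
    (one_left : ∀ p, mul' (1, 0, 0) p = p) (one_right : ∀ p, mul' p (1, 0, 0) = p)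
    (hξξ : mul' (0, 1, 0) (0, 1, 0) = (-(a * c), b, -a))
    (hηη : mul' (0, 0, 1) (0, 0, 1) = (-(b * d), d, -c))
    (hξη : mul' (0, 1, 0) (0, 0, 1) = (-(a * d), 0, 0))
    (hηξ : mul' (0, 0, 1) (0, 1, 0) = (-(a * d), 0, 0)) :
    mul' = cubicMul a b c d := by
  have h : LinearMap.mk₂ A mul' add_left smul_left add_right smul_right
      = cubicMulBilin a b c d := by
    -- `ext` splits `A × A × A` as `A × (A × A)`, so the unit shows up as `(1, 0)`.
    have one_left' : ∀ p, mul' (1, 0) p = p := one_left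
    have one_right' : ∀ p, mul' p (1, 0) = p := one_right
    ext <;> simp [cubicMulBilin, cubicMul, one_left', one_right', hξξ, hηη, hξη, hηξ]
  funext p q
  exact LinearMap.congr_fun₂ h p q
end

theorem cubic_ring_of_form_general
    (A : Type*) [CommRing A] (a b c d : A) :
    (∀ p q, cubicMul a b c d p q = cubicMul a b c d q p) ∧
    (∀ p q r, cubicMul a b c d (cubicMul a b c d p q) r
        = cubicMul a b c d p (cubicMul a b c d q r)) ∧
    (∀ p, cubicMul a b c d (1, 0, 0) p = p) ∧
    (∀ p q r, cubicMul a b c d (p + q) r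
        = cubicMul a b c d p r + cubicMul a b c d q r) ∧
    (∀ (s : A) p q, cubicMul a b c d (s • p) q = s • cubicMul a b c d p q) ∧
    (∀ x y : A,
      (cubicMul a b c d (0, x, y) (0, x, y)).2.1 * y
          - (cubicMul a b c d (0, x, y) (0, x, y)).2.2 * x
        = a * x ^ 3 + b * x ^ 2 * y + c * x * y ^ 2 + d * y ^ 3) ∧
    (∀ mul' : A × A × A → A × A × A → A × A × A,
      (∀ p q r, mul' (p + q) r = mul' p r + mul' q r) →
      (∀ p q r, mul' p (q + r) = mul' p q + mul' p r) →
      (∀ (s : A) p q, mul' (s • p) q = s • mul' p q) →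
      (∀ (s : A) p q, mul' p (s • q) = s • mul' p q) →
      (∀ p, mul' (1, 0, 0) p = p) →
      (∀ p, mul' p (1, 0, 0) = p) →
      mul' (0, 1, 0) (0, 1, 0) = (-(a * c), b, -a) →
      mul' (0, 0, 1) (0, 0, 1) = (-(b * d), d, -c) →
      mul' (0, 1, 0) (0, 0, 1) = (-(a * d), 0, 0) →
      mul' (0, 0, 1) (0, 1, 0) = (-(a * d), 0, 0) →
      mul' = cubicMul a b c d) :=
  ⟨cubicMul_comm a b c d, cubicMul_assoc a b c d, cubicMul_one_left a b c d,
    cubicMul_add_left a b c d, cubicMul_smul_left a b c d, cubicMul_indexForm a b c d,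
    eq_cubicMul_of_table a b c d⟩

/-- **Levi–Delone–Faddeev–Gross.** Over a PID `A` of characteristic `≠ 3`, the
binary cubic form `a·x³ + b·x²y + c·xy² + d·y³` is the index form of the cubic
`A`-algebra `C = A·1 ⊕ A·ξ ⊕ A·η` with multiplication table `ξη = -ad`,
`ξ² = -ac + bξ - aη`, `η² = -bd + dξ - cη`; this multiplication is commutative,
associative, bilinear, with identity `1 = (1,0,0)`, its index form is `f`, and it
is the unique bilinear multiplication with this table. -/
theorem cubic_ring_of_form
    (A : Type*) [CommRing A] [IsDomain A] [IsPrincipalIdealRing A]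
    (hchar : ringChar A ≠ 3) (a b c d : A) :
    (∀ p q, cubicMul a b c d p q = cubicMul a b c d q p) ∧
    (∀ p q r, cubicMul a b c d (cubicMul a b c d p q) r
        = cubicMul a b c d p (cubicMul a b c d q r)) ∧
    (∀ p, cubicMul a b c d (1, 0, 0) p = p) ∧
    (∀ p q r, cubicMul a b c d (p + q) r
        = cubicMul a b c d p r + cubicMul a b c d q r) ∧
    (∀ (s : A) p q, cubicMul a b c d (s • p) q = s • cubicMul a b c d p q) ∧
    (∀ x y : A,
      (cubicMul a b c d (0, x, y) (0, x, y)).2.1 * y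
          - (cubicMul a b c d (0, x, y) (0, x, y)).2.2 * x
        = a * x ^ 3 + b * x ^ 2 * y + c * x * y ^ 2 + d * y ^ 3) ∧
    (∀ mul' : A × A × A → A × A × A → A × A × A,
      (∀ p q r, mul' (p + q) r = mul' p r + mul' q r) →
      (∀ p q r, mul' p (q + r) = mul' p q + mul' p r) →
      (∀ (s : A) p q, mul' (s • p) q = s • mul' p q) →
      (∀ (s : A) p q, mul' p (s • q) = s • mul' p q) →
      (∀ p, mul' (1, 0, 0) p = p) →
      (∀ p, mul' p (1, 0, 0) = p) →
      mul' (0, 1, 0) (0, 1, 0) = (-(a * c), b, -a) →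
      mul' (0, 0, 1) (0, 0, 1) = (-(b * d), d, -c) →
      mul' (0, 1, 0) (0, 0, 1) = (-(a * d), 0, 0) →
      mul' (0, 0, 1) (0, 1, 0) = (-(a * d), 0, 0) →
      mul' = cubicMul a b c d) :=
  cubic_ring_of_form_general A a b c d
end
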